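/- The function P_i(r/(1−t))·(1−t)^i is a polynomial in the variables r and t of total degree i, for every natural number i. -/

import Mathlib

/-!
Since `P_i` is nonzero (`P_i(1) = 1`) of degree at most `i`, its homogenization
`H(x, y) = y^i P_i(x / y)` is a nonzero homogeneous polynomial of degree `i`. The required
polynomial is `H(r, 1 - t)`; the substitution `(x, y) ↦ (x, 1 - y)` is an affine involution and
so preserves total degree.
-/

open Polynomial

/-- The Jacobi polynomial `P_n^{(a,b)}` with natural-number parameters, via the explicit
formula `P_n^{(a,b)}(x) = ∑ s, C(n+a, n−s) C(n+b, s) ((x−1)/2)^s ((x+1)/2)^{n−s}`;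
`jacobiPoly 0 0 n` is the Legendre polynomial `P_n`. -/
noncomputable def jacobiPoly (a b n : ℕ) : Polynomial ℝ :=
  ∑ s ∈ Finset.range (n + 1),
    C ((n + a).choose (n - s) : ℝ) * C ((n + b).choose s : ℝ) *
      (C (1 / 2) * (X - 1)) ^ s * (C (1 / 2) * (X + 1)) ^ (n - s)

theorem natDegree_jacobiPoly_le (a b n : ℕ) : (jacobiPoly a b n).natDegree ≤ n := by
  refine natDegree_sum_le_of_forall_le _ _ fun s hs => ?_
  have hs : s ≤ n := Nat.lt_succ_iff.mp (Finset.mem_range.mp hs)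
  compute_degree
  omega

theorem eval_one_jacobiPoly (a b n : ℕ) : (jacobiPoly a b n).eval 1 = (n + a).choose n := by
  rw [jacobiPoly, eval_finsetSum, Finset.sum_eq_single 0]
  · norm_num
  · intro s _ hs
    simp [hs]
  · simp

theorem jacobiPoly_ne_zero (a b n : ℕ) : jacobiPoly a b n ≠ 0 := fun h => by
  have := eval_one_jacobiPoly a b n
  rw [h, eval_zero, eq_comm, Nat.cast_eq_zero, Nat.choose_eq_zero_iff] at this
  omega

namespace MvPolynomial

variable {σ τ R : Type*} [CommSemiring R]

theorem totalDegree_aeval_le {k : ℕ} (f : σ → MvPolynomial τ R)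
    (hf : ∀ j, (f j).totalDegree ≤ k) (p : MvPolynomial σ R) :
    (aeval f p).totalDegree ≤ k * p.totalDegree := by
  conv_lhs => rw [p.as_sum, map_sum]
  refine totalDegree_finsetSum_le fun d hd => ?_
  rw [aeval_monomial, Finsupp.prod]
  calc _ ≤ (algebraMap R (MvPolynomial τ R) (p.coeff d)).totalDegree +
          (∏ j ∈ d.support, f j ^ d j).totalDegree := totalDegree_mul _ _
    _ ≤ 0 + ∑ j ∈ d.support, d j * k := by
        rw [algebraMap_eq, totalDegree_C]
        refine add_le_add le_rfl ((totalDegree_finsetProd _ _).trans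
          (Finset.sum_le_sum fun j _ => ?_))
        exact (totalDegree_pow _ _).trans (Nat.mul_le_mul_left _ (hf j))
    _ = k * d.sum fun _ e => e := by
        rw [zero_add, Finsupp.sum, Finset.mul_sum]
        simp only [mul_comm]
    _ ≤ k * p.totalDegree := Nat.mul_le_mul_left _ (le_totalDegree hd)

section OneSubSnd

variable (R : Type*) [CommRing R]

noncomputable def oneSubSnd : MvPolynomial (Fin 2) R →ₐ[R] MvPolynomial (Fin 2) R :=
  aeval ![X 0, 1 - X 1]

variable {R}

theorem oneSubSnd_oneSubSnd (q : MvPolynomial (Fin 2) R) : oneSubSnd R (oneSubSnd R q) = q := by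
  change (oneSubSnd R).comp (oneSubSnd R) q = AlgHom.id R _ q
  congr 1
  ext j
  fin_cases j <;> simp [oneSubSnd]

theorem totalDegree_oneSubSnd_le (q : MvPolynomial (Fin 2) R) :
    (oneSubSnd R q).totalDegree ≤ q.totalDegree := by
  refine (totalDegree_aeval_le (k := 1) _ (fun j => ?_) q).trans_eq (one_mul _)
  have totalDegree_X_le (i : Fin 2) : (X i : MvPolynomial (Fin 2) R).totalDegree ≤ 1 :=
    (totalDegree_monomial_le _ _).trans_eq (by simp)
  fin_cases j
  · exact totalDegree_X_le 0
  · simpa using (totalDegree_sub _ _).trans (max_le (by simp) (totalDegree_X_le 1))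

theorem totalDegree_oneSubSnd (q : MvPolynomial (Fin 2) R) :
    (oneSubSnd R q).totalDegree = q.totalDegree :=
  (totalDegree_oneSubSnd_le q).antisymm <| by
    simpa only [oneSubSnd_oneSubSnd] using totalDegree_oneSubSnd_le (oneSubSnd R q)

theorem eval_oneSubSnd (x : Fin 2 → R) (q : MvPolynomial (Fin 2) R) :
    eval x (oneSubSnd R q) = eval ![x 0, 1 - x 1] q := by
  rw [oneSubSnd, aeval_eq_bind₁, hom_bind₁, show (eval x).comp C = RingHom.id R by ext; simp]
  congr 2
  ext j
  fin_cases j <;> simp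

end OneSubSnd

end MvPolynomial

open MvPolynomial in
theorem Polynomial.exists_totalDegree_eq_eval_div_one_sub_mul_pow {K : Type*} [Field K]
    {p : K[X]} {n : ℕ} (hp : p ≠ 0) (hn : p.natDegree ≤ n) :
    ∃ q : MvPolynomial (Fin 2) K, q.totalDegree = n ∧
      ∀ r t : K, t ≠ 1 →
        MvPolynomial.eval ![r, t] q = p.eval (r / (1 - t)) * (1 - t) ^ n := by
  refine ⟨oneSubSnd K (p.homogenize n), ?_, fun r t ht => ?_⟩
  · rw [totalDegree_oneSubSnd]
    exact (isHomogeneous_homogenize p).totalDegree ((homogenize_eq_zero_iff hn).not.mpr hp)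
  · rw [eval_oneSubSnd, eval_homogenize hn _ (sub_ne_zero.mpr ht.symm)]
    simp

/-- The function `(r,t) ↦ P_i(r/(1−t))·(1−t)^i`, with `P_i` the Legendre polynomial, is a
polynomial in `r` and `t` of total degree `i`. -/
theorem legendre_homogenization (i : ℕ) :
    ∃ p : MvPolynomial (Fin 2) ℝ, p.totalDegree = i ∧
      ∀ r t : ℝ, t ≠ 1 →
        MvPolynomial.eval ![r, t] p = (jacobiPoly 0 0 i).eval (r / (1 - t)) * (1 - t) ^ i :=
  exists_totalDegree_eq_eval_div_one_sub_mul_pow (jacobiPoly_ne_zero 0 0 i)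
    (natDegree_jacobiPoly_le 0 0 i)
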